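/- Let $b=(b_1,\ldots,b_n)$ be a unit vector in $\mathbb{R}^n$ and let $A$ be a measurable subset of the hyperplane $b^{\perp}$ whose linear span has dimension $k \in \{1,\ldots,n-1\}$. Then for each $1 \le i \le n$, $|b_i| \cdot |A|_k \le |P_i(A)|_k$, where $P_i$ denotes the orthogonal projection onto $e_i^{\perp}$ and $|\cdot|_k$ denotes $k$-dimensional Hausdorff (Lebesgue) measure. -/

import Mathlib

/-!
On `K = span A` the projection `P` onto `e_iᗮ` satisfies `P† P = id - f ⊗ f`, where `f` is the
projection of `e_i` onto `K`; so its Jacobian (`LinearMap.normDet`) is `√(1 - ‖f‖²)`, and this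
factor scales `μH[k] A` to `μH[k] (P '' A)`. Since `K ⊥ b`, Pythagoras and Cauchy–Schwarz give
`‖f‖² + ⟪b, e_i⟫² ≤ 1`, and `⟪b, e_i⟫ = b_i`.
-/

open MeasureTheory Module Submodule
open scoped RealInnerProductSpace

theorem LinearMap.hausdorffMeasure_image_of_subset_submodule {E F : Type*}
    [NormedAddCommGroup E] [InnerProductSpace ℝ E] [MeasurableSpace E] [BorelSpace E]
    [NormedAddCommGroup F] [InnerProductSpace ℝ F] [MeasurableSpace F] [BorelSpace F]
    (L : E →ₗ[ℝ] F) (K : Submodule ℝ E) [FiniteDimensional ℝ K] {A : Set E}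
    (hA : A ⊆ K) :
    μH[finrank ℝ K] (L '' A) =
      ENNReal.ofReal (L ∘ₗ K.subtype).normDet * μH[finrank ℝ K] A := by
  obtain ⟨A, rfl⟩ : ∃ A' : Set K, K.subtype '' A' = A :=
    ⟨K.subtype ⁻¹' A, Set.image_preimage_eq_of_subset (by simpa using hA)⟩
  rw [Set.image_image]
  change μH[_] ((L ∘ₗ K.subtype) '' A) = _ * μH[_] (K.subtypeₗᵢ '' A)
  rw [(L ∘ₗ K.subtype).hausdorffMeasure_image,
    K.subtypeₗᵢ.isometry.hausdorffMeasure_image (by simp)]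

section

variable {E : Type*} [NormedAddCommGroup E] [InnerProductSpace ℝ E]

theorem sq_norm_starProjection_add_sq_inner_le {b : E} (hb : ‖b‖ = 1) {K : Submodule ℝ E}
    [K.HasOrthogonalProjection] (hK : K ≤ (ℝ ∙ b)ᗮ) (e : E) :
    ‖K.starProjection e‖ ^ 2 + ⟪b, e⟫ ^ 2 ≤ ‖e‖ ^ 2 := by
  have hb_perp : ⟪b, K.starProjection e⟫ = 0 :=
    mem_orthogonal_singleton_iff_inner_right.mp (hK (K.starProjection_apply_mem e))
  have hbe : ⟪b, e⟫ = ⟪b, Kᗮ.starProjection e⟫ := by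
    rw [starProjection_orthogonal_val, inner_sub_right, hb_perp, sub_zero]
  have hcs : |⟪b, e⟫| ≤ ‖Kᗮ.starProjection e‖ := by
    simpa [hbe, hb] using abs_real_inner_le_norm b (Kᗮ.starProjection e)
  rw [norm_sq_eq_add_norm_sq_starProjection e K, ← sq_abs ⟪b, e⟫]
  gcongr

theorem inner_starProjection_orthogonal_singleton {e : E} (he : ‖e‖ = 1) (x y : E) :
    ⟪(ℝ ∙ e)ᗮ.starProjection x, (ℝ ∙ e)ᗮ.starProjection y⟫ = ⟪x, y⟫ - ⟪e, x⟫ * ⟪e, y⟫ := by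
  simp only [starProjection_orthogonal_val, starProjection_unit_singleton ℝ he, inner_sub_left,
    inner_sub_right, real_inner_smul_left, real_inner_smul_right, real_inner_self_eq_norm_sq, he,
    real_inner_comm x e, real_inner_comm y e]
  ring

theorem normDet_sq_starProjection_comp_subtype [FiniteDimensional ℝ E] {e : E} (he : ‖e‖ = 1)
    (K : Submodule ℝ E) :
    ((ℝ ∙ e)ᗮ.starProjection.toLinearMap ∘ₗ K.subtype).normDet ^ 2 =
      1 - ‖K.starProjection e‖ ^ 2 := by
  set T := (ℝ ∙ e)ᗮ.starProjection.toLinearMap ∘ₗ K.subtype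
  set f : K := K.orthogonalProjectionOnto e
  have hf : ∀ x : K, ⟪f, x⟫ = ⟪e, x⟫ := fun x => by
    rw [real_inner_comm, inner_orthogonalProjectionOnto_eq_of_mem_left, real_inner_comm]
  have hT : LinearMap.adjoint T ∘ₗ T = LinearMap.transvection (-innerₛₗ ℝ f) f := by
    ext x : 1
    refine ext_inner_right ℝ fun y => ?_
    rw [LinearMap.comp_apply, LinearMap.adjoint_inner_left, LinearMap.transvection.apply]
    simp only [T, LinearMap.comp_apply, ContinuousLinearMap.coe_coe, coe_subtype,
      inner_starProjection_orthogonal_singleton he, LinearMap.neg_apply, innerₛₗ_apply_apply,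
      inner_add_left, ← coe_inner, real_inner_smul_left, hf]
    ring
  have hsq := T.normDet_sq
  simp only [RCLike.ofReal_real_eq_id, id, hT, LinearMap.transvection.det, LinearMap.neg_apply,
    innerₛₗ_apply_apply, real_inner_self_eq_norm_sq] at hsq
  rw [hsq, ← sub_eq_add_neg, starProjection_apply, coe_norm]

theorem abs_inner_le_normDet_starProjection_comp_subtype [FiniteDimensional ℝ E] {b e : E}
    (hb : ‖b‖ = 1) (he : ‖e‖ = 1) {K : Submodule ℝ E} (hK : K ≤ (ℝ ∙ b)ᗮ) :
    |⟪b, e⟫| ≤ ((ℝ ∙ e)ᗮ.starProjection.toLinearMap ∘ₗ K.subtype).normDet := by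
  refine abs_le_of_sq_le_sq ?_ (LinearMap.normDet_nonneg _)
  rw [normDet_sq_starProjection_comp_subtype he]
  have h := sq_norm_starProjection_add_sq_inner_le hb hK e
  rw [he, one_pow] at h
  linarith

end

theorem projection_measure_bound_general (n k : ℕ)
    (b : EuclideanSpace ℝ (Fin n)) (hb : ‖b‖ = 1)
    (A : Set (EuclideanSpace ℝ (Fin n)))
    (hAb : A ⊆ ((ℝ ∙ b)ᗮ : Set (EuclideanSpace ℝ (Fin n))))
    (hdim : Module.finrank ℝ (Submodule.span ℝ A) = k) (i : Fin n) :
    ENNReal.ofReal |b i| * μH[(k : ℝ)] A ≤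
      μH[(k : ℝ)]
        ((fun x => ((Submodule.orthogonalProjection ((ℝ ∙ (EuclideanSpace.single i (1 : ℝ)))ᗮ) x :
            EuclideanSpace ℝ (Fin n)))) '' A) := by
  set e : EuclideanSpace ℝ (Fin n) := EuclideanSpace.single i 1
  have he : ‖e‖ = 1 := by simp [e]
  have hbi : b i = ⟪b, e⟫ := by simp [e, EuclideanSpace.inner_single_right]
  change _ ≤ μH[(k : ℝ)] ((ℝ ∙ e)ᗮ.starProjection.toLinearMap '' A)
  rw [← hdim, LinearMap.hausdorffMeasure_image_of_subset_submodule _ _ subset_span, hbi]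
  gcongr
  exact abs_inner_le_normDet_starProjection_comp_subtype hb he (span_le.mpr hAb)

theorem projection_measure_bound (n k : ℕ) (hk1 : 1 ≤ k) (hkn : k ≤ n - 1)
    (b : EuclideanSpace ℝ (Fin n)) (hb : ‖b‖ = 1)
    (A : Set (EuclideanSpace ℝ (Fin n))) (hA : MeasurableSet A)
    (hAb : A ⊆ ((ℝ ∙ b)ᗮ : Set (EuclideanSpace ℝ (Fin n))))
    (hdim : Module.finrank ℝ (Submodule.span ℝ A) = k) (i : Fin n) :
    ENNReal.ofReal |b i| * μH[(k : ℝ)] A ≤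
      μH[(k : ℝ)]
        ((fun x => ((Submodule.orthogonalProjection ((ℝ ∙ (EuclideanSpace.single i (1 : ℝ)))ᗮ) x :
            EuclideanSpace ℝ (Fin n)))) '' A) :=
  projection_measure_bound_general n k b hb A hAb hdim i
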